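/- arXiv:2602.16333 — 5 statements merged into one kernel-verified Lean document; each statement's English description precedes it below -/
import Mathlib

section
/- Let Γ be a finite group and X ⊆ Γ a subset with |X| ≤ (2/3)|Γ|. Then there exists some g ∈ Γ such that |Xg \ X| ≥ |X|/3. -/
/-- Let `Γ` be a finite group and `X ⊆ Γ` a subset with `|X| ≤ (2/3)|Γ|`. Then there exists
some `g ∈ Γ` such that `|Xg \ X| ≥ |X|/3`. -/
theorem exists_translate_large_difference {Γ : Type*} [Group Γ] [Fintype Γ]
    (X : Set Γ) (hX : (X.ncard : ℝ) ≤ 2 / 3 * (Fintype.card Γ : ℝ)) :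
    ∃ g : Γ, (X.ncard : ℝ) / 3 ≤ ((((· * g) '' X) \ X).ncard : ℝ) := by
  classical
  by_contra h
  push_neg at h
  set A := X.toFinset with hA
  set n := Fintype.card Γ with hn
  set k := A.card with hk
  have hXk : X.ncard = k := (Set.ncard_eq_toFinset_card' X)
  have hkn : A ⊆ Finset.univ := Finset.subset_univ A
  -- card of the difference, as Finsets
  have hdiff : ∀ g : Γ, (((· * g) '' X) \ X).ncard = (A.image (· * g) \ A).card := by
    intro g
    rw [Set.ncard_eq_toFinset_card']
    congr 1
    ext y
    simp [hA]
  -- intersection = image of filter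
  have hinter : ∀ g : Γ, A.image (· * g) ∩ A = (A.filter (fun x => x * g ∈ A)).image (· * g) := by
    intro g
    ext y
    simp only [Finset.mem_inter, Finset.mem_image, Finset.mem_filter]
    constructor
    · rintro ⟨⟨x, hx, rfl⟩, hy⟩
      exact ⟨x, ⟨hx, hy⟩, rfl⟩
    · rintro ⟨x, ⟨hx, hxg⟩, rfl⟩
      exact ⟨⟨x, hx, rfl⟩, hxg⟩
  have hintercard : ∀ g : Γ, (A.image (· * g) ∩ A).card = (A.filter (fun x => x * g ∈ A)).card := by
    intro g
    rw [hinter g]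
    exact Finset.card_image_of_injective _ (mul_left_injective g)
  have himgcard : ∀ g : Γ, (A.image (· * g)).card = k := fun g =>
    Finset.card_image_of_injective _ (mul_left_injective g)
  -- card of difference via subtraction
  have hdcard : ∀ g : Γ, (A.image (· * g) \ A).card + (A.filter (fun x => x * g ∈ A)).card = k := by
    intro g
    rw [← hintercard g, Finset.card_sdiff_add_card_inter, himgcard g]
  -- key double counting
  have hsum : ∑ g : Γ, (A.filter (fun x => x * g ∈ A)).card = k * k := by
    have : ∀ g : Γ, (A.filter (fun x => x * g ∈ A)).card
        = ∑ x ∈ A, if x * g ∈ A then 1 else 0 := by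
      intro g; rw [Finset.card_filter]
    simp only [this]
    rw [Finset.sum_comm]
    have inner : ∀ x : Γ, (∑ g : Γ, if x * g ∈ A then 1 else 0) = k := by
      intro x
      rw [← Finset.card_filter]
      apply Finset.card_bij' (fun g _ => x * g) (fun y _ => x⁻¹ * y)
      · intro g hg; simpa using (Finset.mem_filter.mp hg).2
      · intro y hy; simp [hy]
      · intro g hg; group
      · intro y hy; group
    calc (∑ x ∈ A, ∑ g : Γ, if x * g ∈ A then 1 else 0) = ∑ x ∈ A, k := by
          exact Finset.sum_congr rfl fun x _ => inner x
      _ = k * k := by rw [Finset.sum_const, smul_eq_mul]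
  -- sum of difference cards
  have hsumd : ∑ g : Γ, ((A.image (· * g) \ A).card : ℝ) = k * (n - k) := by
    have h1 : ∀ g : Γ, ((A.image (· * g) \ A).card : ℝ)
        = (k : ℝ) - ((A.filter (fun x => x * g ∈ A)).card : ℝ) := by
      intro g
      have := hdcard g
      have : ((A.image (· * g) \ A).card : ℝ) + ((A.filter (fun x => x * g ∈ A)).card : ℝ)
          = (k : ℝ) := by exact_mod_cast congrArg (Nat.cast : ℕ → ℝ) this
      linarith
    simp only [h1]
    rw [Finset.sum_sub_distrib]
    have h2 : (∑ g : Γ, ((A.filter (fun x => x * g ∈ A)).card : ℝ)) = (k : ℝ) * k := by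
      rw [← Nat.cast_sum, hsum]; exact_mod_cast rfl
    rw [h2, Finset.sum_const, Finset.card_univ, ← hn, nsmul_eq_mul]
    ring
  -- now derive contradiction
  have hnpos : 0 < n := Fintype.card_pos
  have hsumlt : ∑ g : Γ, ((A.image (· * g) \ A).card : ℝ)
      < ∑ _g : Γ, (k : ℝ) / 3 := by
    apply Finset.sum_lt_sum_of_nonempty
    · exact Finset.univ_nonempty
    · intro g _
      have := h g
      rw [hXk, hdiff g] at this
      exact this
  rw [hsumd, Finset.sum_const, Finset.card_univ, ← hn] at hsumlt
  rw [hXk] at hX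
  have hk0 : (0 : ℝ) ≤ (k : ℝ) := Nat.cast_nonneg k
  have hn0 : (0 : ℝ) < (n : ℝ) := by exact_mod_cast hnpos
  rw [nsmul_eq_mul] at hsumlt
  nlinarith [hsumlt, hX, hk0, hn0]
end

section
/- Every connected vertex transitive digraph is strongly connected, i.e., for any two vertices u, v there is a directed path from u to v. -/
/-- A digraph is vertex transitive if for any two vertices `u, v` there is an
automorphism of the digraph mapping `u` to `v`. -/
def Digraph.IsVertexTransitive {V : Type*} (D : Digraph V) : Prop :=
  ∀ u v : V, ∃ e : V ≃ V, (∀ x y, D.Adj (e x) (e y) ↔ D.Adj x y) ∧ e u = v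

/-- The underlying undirected (simple) graph of a digraph. -/
def Digraph.underlying {V : Type*} (D : Digraph V) : SimpleGraph V where
  Adj x y := x ≠ y ∧ (D.Adj x y ∨ D.Adj y x)
  symm := ⟨fun x y h => ⟨h.1.symm, h.2.symm⟩⟩
  loopless := ⟨fun x h => h.1 rfl⟩

/-- `D.HasDirPathFromTo u v n` : there is a directed path (distinct vertices) of length
`n` from `u` to `v` in `D`. -/
def Digraph.HasDirPathFromTo {V : Type*} (D : Digraph V) (u v : V) (n : ℕ) : Prop :=
  ∃ f : Fin (n + 1) → V, Function.Injective f ∧ f 0 = u ∧ f (Fin.last n) = v ∧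
    ∀ i : Fin n, D.Adj (f i.castSucc) (f i.succ)

/-!
If `e` is an automorphism with `e x = y` and `x → y` is an arc, then so is every
`eᵏ x → eᵏ⁺¹ x`; since `e` has finite order, the walk `y = e x → e² x → ⋯` returns to `x`.
Thus every arc can be reversed by a directed walk, so directed reachability is symmetric and,
the underlying graph being connected, holds between any two vertices. Cutting a directed walk at
its first return to a vertex leaves a directed path.
-/

open Relation

theorem Equiv.Perm.reflTransGen_apply_pow {α : Type*} {r : α → α → Prop} (e : Equiv.Perm α)
    (he : ∀ a b, r a b → r (e a) (e b)) (n : ℕ) {x : α} (hx : r x (e x)) :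
    ReflTransGen r x ((e ^ n) x) := by
  induction n generalizing x with
  | zero => exact .refl
  | succ n ih =>
    rw [pow_succ, Equiv.Perm.mul_apply]
    exact .head hx (ih (he _ _ hx))

theorem Equiv.Perm.reflTransGen_apply_self {α : Type*} [Finite α] {r : α → α → Prop}
    (e : Equiv.Perm α) (he : ∀ a b, r a b → r (e a) (e b)) {x : α} (hx : r x (e x)) :
    ReflTransGen r (e x) x := by
  obtain ⟨n, hn, hpow⟩ := (isOfFinOrder_of_finite e).exists_pow_eq_one
  have hreturn : (e ^ (n - 1)) (e x) = x := by
    rw [← Equiv.Perm.mul_apply, ← pow_succ, Nat.sub_add_cancel hn, hpow, Equiv.Perm.one_apply]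
  simpa only [hreturn] using e.reflTransGen_apply_pow he (n - 1) (he _ _ hx)

namespace Digraph

variable {V : Type*} {D : Digraph V}

theorem IsVertexTransitive.reflTransGen_of_adj [Finite V] (hD : D.IsVertexTransitive) {x y : V}
    (hxy : D.Adj x y) : ReflTransGen D.Adj y x := by
  obtain ⟨e, he, rfl⟩ := hD x y
  exact Equiv.Perm.reflTransGen_apply_self e (fun a b => (he a b).2) hxy

theorem reflTransGen_of_connected (hconn : D.underlying.Connected)
    (hrev : ∀ x y, D.Adj x y → ReflTransGen D.Adj y x) (u v : V) : ReflTransGen D.Adj u v := by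
  have hstep : ∀ a b, D.underlying.Adj a b → ReflTransGen D.Adj a b := by
    rintro a b ⟨-, hab | hba⟩
    exacts [.single hab, hrev b a hba]
  exact ReflTransGen.lift' id hstep u v
    ((SimpleGraph.reachable_iff_reflTransGen u v).1 (hconn u v))

section DirPath

variable {n : ℕ} {u b c : V} {f : Fin (n + 1) → V}

theorem hasDirPathFromTo_castLE (hf : Function.Injective f) (h0 : f 0 = u)
    (hadj : ∀ i : Fin n, D.Adj (f i.castSucc) (f i.succ)) (i : Fin (n + 1)) :
    D.HasDirPathFromTo u (f i) i := by
  have hle : (i : ℕ) + 1 ≤ n + 1 := i.isLt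
  refine ⟨f ∘ Fin.castLE hle, hf.comp (Fin.castLE_injective hle), by simpa using h0,
    congrArg f (Fin.ext rfl), fun j => hadj ⟨j, by omega⟩⟩

theorem hasDirPathFromTo_snoc (hf : Function.Injective f) (h0 : f 0 = u)
    (hlast : f (Fin.last n) = b) (hadj : ∀ i : Fin n, D.Adj (f i.castSucc) (f i.succ))
    (hbc : D.Adj b c) (hc : c ∉ Set.range f) : D.HasDirPathFromTo u c (n + 1) := by
  refine ⟨Fin.snoc f c, Fin.snoc_injective_of_injective hf hc, ?_, Fin.snoc_last _ _, ?_⟩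
  · rwa [← Fin.castSucc_zero, Fin.snoc_castSucc]
  · intro i
    induction i using Fin.lastCases with
    | last => rwa [Fin.succ_last, Fin.snoc_last, Fin.snoc_castSucc, hlast]
    | cast j => rw [Fin.succ_castSucc, Fin.snoc_castSucc, Fin.snoc_castSucc]; exact hadj j

end DirPath

theorem exists_hasDirPathFromTo_of_reflTransGen {u v : V} (h : ReflTransGen D.Adj u v) :
    ∃ n, D.HasDirPathFromTo u v n := by
  induction h with
  | refl => exact ⟨0, fun _ => u, fun i j _ => Fin.ext (by omega), rfl, rfl, Fin.elim0⟩
  | @tail b c _ hbc ih =>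
    obtain ⟨n, f, hf, h0, hlast, hadj⟩ := ih
    by_cases hc : c ∈ Set.range f
    · obtain ⟨i, rfl⟩ := hc
      exact ⟨i, hasDirPathFromTo_castLE hf h0 hadj i⟩
    · exact ⟨n + 1, hasDirPathFromTo_snoc hf h0 hlast hadj hbc hc⟩

end Digraph

theorem vertexTransitive_connected_stronglyConnected_general {V : Type*} [Fintype V]
    (D : Digraph V)
    (hconn : D.underlying.Connected)
    (htrans : D.IsVertexTransitive) :
    ∀ u v : V, ∃ n : ℕ, D.HasDirPathFromTo u v n := fun u v =>
  Digraph.exists_hasDirPathFromTo_of_reflTransGen <|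
    Digraph.reflTransGen_of_connected hconn (fun _ _ => htrans.reflTransGen_of_adj) u v

/-- Every connected vertex transitive digraph is strongly connected: for any two vertices
`u, v` there is a directed path from `u` to `v`. -/
theorem vertexTransitive_connected_stronglyConnected {V : Type*} [Fintype V]
    (D : Digraph V)
    (hirr : ∀ v : V, ¬ D.Adj v v)
    (hconn : D.underlying.Connected)
    (htrans : D.IsVertexTransitive) :
    ∀ u v : V, ∃ n : ℕ, D.HasDirPathFromTo u v n :=
  vertexTransitive_connected_stronglyConnected_general D hconn htrans
end

section
/- Let G be a connected, nearly transitive finite simple graph with diameter d ≥ 20. Then G contains an induced cycle of length at least d − 17. -/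
/-- A graph is nearly transitive if for any two vertices `u, v` there is a graph
automorphism mapping `u` to `v` or to a neighbour of `v`. -/
def SimpleGraph.NearlyTransitive {W : Type*} (G : SimpleGraph W) : Prop :=
  ∀ u v : W, ∃ e : W ≃ W, (∀ x y, G.Adj (e x) (e y) ↔ G.Adj x y) ∧
    (e u = v ∨ G.Adj (e u) v)

/-- `G.HasInducedCycleOfLen ℓ` : the graph `G` contains an induced cycle of length `ℓ`,
i.e. `ℓ` distinct vertices `u_1, …, u_ℓ` such that `u_i` is adjacent to `u_j` iff `i` and
`j` are consecutive modulo `ℓ`. -/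
def SimpleGraph.HasInducedCycleOfLen {W : Type*} (G : SimpleGraph W) (ℓ : ℕ) : Prop :=
  ∃ f : ZMod ℓ → W, Function.Injective f ∧
    ∀ i j, G.Adj (f i) (f j) ↔ (j = i + 1 ∨ i = j + 1)

/-!
Let `x, y` be at distance `d` and `P` a geodesic between them; put `r = ⌊d/4⌋`, let `m` be a
vertex of `P` near its middle and `a, b` the vertices of `P` at distance `r` from `m` on either
side. Near transitivity moves `x` to `m` or next to it, so some `z` is at distance `≥ d - 1` from
`m`, and the geodesics `a–x`, `x–z`, `z–y`, `y–b` all avoid the open ball of radius `r` around `m`.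
A shortest walk `S` from `a` to `b` outside that ball is an induced path. Cut it between the last
vertex adjacent to the successor of `a` on `P` and the first vertex adjacent to the predecessor of
`b`; this piece of `S` and the segment of `P` strictly inside the ball form an induced cycle, since
only the ends of the segment can touch vertices outside the ball. As `dist a b = 2r`, the piece of
`S` has length at least `2r - 4`, so the cycle has length at least `4r - 4 ≥ d - 7`.
-/

lemma Nat.exists_last_before_first {A B : ℕ → Prop} {L : ℕ} (hA : A 0) (hB : B L) :
    ∃ i j, i ≤ j ∧ j ≤ L ∧ A i ∧ B j ∧ (∀ t, i < t → t ≤ j → ¬ A t) ∧ ∀ t < j, ¬ B t := by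
  classical
  have hex : ∃ t, B t := ⟨L, hB⟩
  exact ⟨Nat.findGreatest A (Nat.find hex), Nat.find hex, Nat.findGreatest_le _,
    Nat.find_min' hex hB, Nat.findGreatest_spec (Nat.zero_le _) hA, Nat.find_spec hex,
    fun _ h₁ h₂ => Nat.findGreatest_is_greatest h₁ h₂, fun _ ht => Nat.find_min hex ht⟩

namespace SimpleGraph

variable {V V' : Type*} {G : SimpleGraph V} {G' : SimpleGraph V'} {u v w : V} {g : ℕ → V} {n : ℕ}

lemma Hom.edist_le (f : G →g G') (u v : V) : G'.edist (f u) (f v) ≤ G.edist u v := by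
  by_cases h : G.Reachable u v
  · obtain ⟨p, hp⟩ := h.exists_walk_length_eq_edist
    simpa [hp] using G'.edist_le (p.map f)
  · simp [edist_eq_top_of_not_reachable h]

lemma Iso.dist_eq (φ : G ≃g G') (u v : V) : G'.dist (φ u) (φ v) = G.dist u v := by
  have h : G.edist u v ≤ G'.edist (φ u) (φ v) := by
    simpa using φ.symm.toHom.edist_le (φ u) (φ v)
  have h' : G'.edist (φ u) (φ v) ≤ G.edist u v := φ.toHom.edist_le u v
  rw [dist, dist, le_antisymm h' h]

lemma NearlyTransitive.exists_dist_le_dist_add_one (htrans : G.NearlyTransitive)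
    (hconn : G.Connected) (x y m : V) : ∃ z, G.dist x y ≤ G.dist m z + 1 := by
  obtain ⟨e, he, hem⟩ := htrans x m
  let φ : G ≃g G := ⟨e, he _ _⟩
  have hφ : G.dist (e x) (e y) = G.dist x y := φ.dist_eq x y
  have hm : G.dist (e x) m ≤ 1 := by
    rcases hem with h | h
    · simp [h]
    · exact (dist_eq_one_iff_adj.2 h).le
  have := hconn.dist_triangle (u := e x) (v := m) (w := e y)
  exact ⟨e y, by omega⟩

lemma Walk.dist_getVert_le (p : G.Walk u v) {i j : ℕ} (hij : i ≤ j) :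
    G.dist (p.getVert i) (p.getVert j) ≤ j - i := by
  have h := G.dist_le ((p.drop i).take (j - i))
  rw [Walk.take_length, Walk.drop_getVert, Nat.add_sub_cancel' hij] at h
  omega

def IsGeodesicSeq (G : SimpleGraph V) (g : ℕ → V) (n : ℕ) : Prop :=
  ∀ i j, i ≤ j → j ≤ n → G.dist (g i) (g j) = j - i

lemma IsGeodesicSeq.shift {k l : ℕ} (h : IsGeodesicSeq G g n) (hkl : k + l ≤ n) :
    IsGeodesicSeq G (fun i => g (k + i)) l := by
  intro i j hij hj
  rw [h (k + i) (k + j) (by omega) (by omega)]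
  omega

lemma IsGeodesicSeq.dist_eq (h : IsGeodesicSeq G g n) {i j : ℕ} (hi : i ≤ n) (hj : j ≤ n) :
    G.dist (g i) (g j) = j - i + (i - j) := by
  rcases le_total i j with hij | hji
  · rw [h i j hij hj]; omega
  · rw [dist_comm, h j i hji hi]; omega

lemma Walk.isGeodesicSeq_getVert (p : G.Walk u v) (hp : p.length = G.dist u v) :
    IsGeodesicSeq G p.getVert p.length := by
  intro i j hij hj
  have hui : G.dist u (p.getVert i) ≤ i := by simpa using p.dist_getVert_le (Nat.zero_le i)
  have hjv : G.dist (p.getVert j) v ≤ p.length - j := by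
    simpa [p.getVert_length] using p.dist_getVert_le hj
  have h₁ := (p.take i).reachable.dist_triangle_left v
  have h₂ := (p.drop j).reachable.dist_triangle_right (p.getVert i)
  have := p.dist_getVert_le hij
  omega

lemma Reachable.exists_isGeodesicSeq (h : G.Reachable u v) :
    ∃ g, g 0 = u ∧ g (G.dist u v) = v ∧ IsGeodesicSeq G g (G.dist u v) := by
  obtain ⟨p, hp⟩ := h.exists_walk_length_eq_dist
  exact ⟨p.getVert, p.getVert_zero, hp ▸ p.getVert_length, hp ▸ p.isGeodesicSeq_getVert hp⟩

lemma Walk.dist_add_dist_of_mem_support (p : G.Walk u v) (hp : p.length = G.dist u v)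
    (hw : w ∈ p.support) : G.dist u w + G.dist w v = G.dist u v := by
  obtain ⟨i, rfl, hi⟩ := Walk.mem_support_iff_exists_getVert.1 hw
  have h := p.isGeodesicSeq_getVert hp
  have h₁ := h 0 i (Nat.zero_le i) hi
  have h₂ := h i p.length hi le_rfl
  rw [p.getVert_zero] at h₁
  rw [p.getVert_length] at h₂
  omega

lemma Connected.exists_walk_forall_mem_support_le_dist (hconn : G.Connected) {m : V} {r : ℕ}
    (h : G.dist u w + 2 * r ≤ G.dist m u + G.dist m w + 1) :
    ∃ p : G.Walk u w, ∀ v ∈ p.support, r ≤ G.dist m v := by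
  obtain ⟨p, hp⟩ := hconn.exists_walk_length_eq_dist u w
  refine ⟨p, fun v hv => ?_⟩
  have := p.dist_add_dist_of_mem_support hp hv
  have := hconn.dist_triangle (u := m) (v := v) (w := w)
  have := hconn.dist_triangle (u := m) (v := v) (w := u)
  rw [dist_comm (u := v) (v := u)] at this
  omega

structure IsInducedPathSeq (G : SimpleGraph V) (g : ℕ → V) (n : ℕ) : Prop where
  injOn : Set.InjOn g (Set.Iic n)
  adj_iff : ∀ ⦃i⦄, i ≤ n → ∀ ⦃j⦄, j ≤ n → (G.Adj (g i) (g j) ↔ j = i + 1 ∨ i = j + 1)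

lemma IsGeodesicSeq.isInducedPathSeq (h : IsGeodesicSeq G g n) : IsInducedPathSeq G g n := by
  refine ⟨fun i hi j hj hij => ?_, fun i hi j hj => ?_⟩
  · have := h.dist_eq hi hj
    rw [hij, dist_self] at this
    omega
  · rw [← dist_eq_one_iff_adj, h.dist_eq hi hj]
    omega

lemma IsInducedPathSeq.adj_succ (h : IsInducedPathSeq G g n) {i : ℕ} (hi : i < n) :
    G.Adj (g i) (g (i + 1)) :=
  (h.adj_iff hi.le hi).2 (Or.inl rfl)

lemma IsInducedPathSeq.shift {k l : ℕ} (h : IsInducedPathSeq G g n) (hkl : k + l ≤ n) :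
    IsInducedPathSeq G (fun i => g (k + i)) l := by
  refine ⟨fun i (hi : i ≤ l) j (hj : j ≤ l) hij => ?_, fun i hi j hj => ?_⟩
  · have := h.injOn (by omega : k + i ≤ n) (by omega : k + j ≤ n) hij
    omega
  · rw [h.adj_iff (by omega) (by omega)]
    omega

lemma IsInducedPathSeq.induce {s : Set V} {f : ℕ → s} (h : IsInducedPathSeq (G.induce s) f n) :
    IsInducedPathSeq G (fun i => (f i : V)) n :=
  ⟨fun _ hi _ hj hij => h.injOn hi hj (Subtype.ext hij), h.adj_iff⟩

lemma IsInducedPathSeq.dist_le (h : IsInducedPathSeq G g n) {i j : ℕ} (hij : i ≤ j) (hjn : j ≤ n) :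
    G.dist (g i) (g j) ≤ j - i := by
  induction j, hij using Nat.le_induction with
  | base => simp
  | succ j hij ih =>
    have hadj := h.adj_succ hjn
    have := hadj.reachable.dist_triangle_right (g i)
    have := ih (by omega)
    rw [dist_eq_one_iff_adj.2 hadj] at *
    omega

lemma hasInducedCycleOfLen_of_cyclicSeq (hn : 0 < n) (c : ℕ → V)
    (hinj : Set.InjOn c (Set.Iio n))
    (hadj : ∀ ⦃u⦄, u < n → ∀ ⦃v⦄, v < n → (G.Adj (c u) (c v) ↔
      v = u + 1 ∨ u = v + 1 ∨ (u + 1 = n ∧ v = 0) ∨ (v + 1 = n ∧ u = 0))) :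
    G.HasInducedCycleOfLen n := by
  have : NeZero n := ⟨hn.ne'⟩
  have hsucc : ∀ i j : ZMod n, j = i + 1 ↔ j.val = i.val + 1 ∨ (i.val + 1 = n ∧ j.val = 0) := by
    intro i j
    rw [← (ZMod.val_injective n).eq_iff, ZMod.val_add, ZMod.val_one_eq_one_mod, Nat.add_mod_mod]
    have := i.val_lt
    have := j.val_lt
    rcases (show i.val + 1 < n ∨ i.val + 1 = n by omega) with h | h
    · rw [Nat.mod_eq_of_lt h]; omega
    · rw [h, Nat.mod_self]; omega
  refine ⟨fun i => c i.val, fun i j hij => ZMod.val_injective n (hinj i.val_lt j.val_lt hij),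
    fun i j => ?_⟩
  rw [hadj i.val_lt j.val_lt, hsucc, hsucc]
  omega

lemma hasInducedCycleOfLen_of_isInducedPathSeq {X Y : ℕ → V} {n₁ n₂ : ℕ}
    (hX : IsInducedPathSeq G X n₁) (hY : IsInducedPathSeq G Y n₂)
    (hne : ∀ ⦃i⦄, i ≤ n₁ → ∀ ⦃j⦄, j ≤ n₂ → X i ≠ Y j)
    (hadj : ∀ ⦃i⦄, i ≤ n₁ → ∀ ⦃j⦄, j ≤ n₂ →
      (G.Adj (X i) (Y j) ↔ (i = 0 ∧ j = 0) ∨ (i = n₁ ∧ j = n₂))) :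
    G.HasInducedCycleOfLen (n₁ + n₂ + 2) := by
  set n := n₁ + n₂ + 2
  let c : ℕ → V := fun k => if k ≤ n₁ then X k else Y (n - 1 - k)
  have hcX : ∀ k ≤ n₁, c k = X k := fun k hk => if_pos hk
  have hcY : ∀ k, n₁ < k → c k = Y (n - 1 - k) := fun k hk => if_neg (by omega)
  refine hasInducedCycleOfLen_of_cyclicSeq (by omega) c
    (fun u (hu : u < n) v (hv : v < n) huv => ?_) (fun u hu v hv => ?_)
  · rcases le_or_gt u n₁ with hu₁ | hu₁ <;> rcases le_or_gt v n₁ with hv₁ | hv₁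
    · rw [hcX u hu₁, hcX v hv₁] at huv
      exact hX.injOn hu₁ hv₁ huv
    · rw [hcX u hu₁, hcY v hv₁] at huv
      exact absurd huv (hne hu₁ (by omega))
    · rw [hcY u hu₁, hcX v hv₁] at huv
      exact absurd huv.symm (hne hv₁ (by omega))
    · rw [hcY u hu₁, hcY v hv₁] at huv
      have := hY.injOn (by omega : n - 1 - u ≤ n₂) (by omega : n - 1 - v ≤ n₂) huv
      omega
  · rcases le_or_gt u n₁ with hu₁ | hu₁ <;> rcases le_or_gt v n₁ with hv₁ | hv₁
    · rw [hcX u hu₁, hcX v hv₁, hX.adj_iff hu₁ hv₁]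
      omega
    · rw [hcX u hu₁, hcY v hv₁, hadj hu₁ (by omega)]
      omega
    · rw [hcY u hu₁, hcX v hv₁, G.adj_comm, hadj hv₁ (by omega)]
      omega
    · rw [hcY u hu₁, hcY v hv₁, hY.adj_iff (by omega) (by omega)]
      omega

lemma Connected.dist_le_dist_add_four (hconn : G.Connected) {a a' s s' b' b : V}
    (ha : G.Adj a a') (hs : G.Adj a' s) (hs' : G.Adj s' b') (hb : G.Adj b' b) :
    G.dist a b ≤ G.dist s s' + 4 := by
  have h₁ := hconn.dist_triangle (u := a) (v := s) (w := b)
  have h₂ := hconn.dist_triangle (u := a) (v := a') (w := s)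
  have h₃ := hconn.dist_triangle (u := s) (v := s') (w := b)
  have h₄ := hconn.dist_triangle (u := s') (v := b') (w := b)
  rw [dist_eq_one_iff_adj.2 ha, dist_eq_one_iff_adj.2 hs] at h₂
  rw [dist_eq_one_iff_adj.2 hs', dist_eq_one_iff_adj.2 hb] at h₄
  omega

theorem exists_hasInducedCycleOfLen_of_isInducedPathSeq_outside_ball (hconn : G.Connected)
    {P S : ℕ → V} {r L : ℕ} (hP : IsGeodesicSeq G P (2 * r)) (hr : 2 ≤ r)
    (hS : IsInducedPathSeq G S L) (hS0 : S 0 = P 0) (hSL : S L = P (2 * r))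
    (hSfar : ∀ t ≤ L, r ≤ G.dist (P r) (S t)) :
    ∃ ℓ, 4 * r - 4 ≤ ℓ ∧ G.HasInducedCycleOfLen ℓ := by
  have hPm : ∀ i ≤ 2 * r, G.dist (P r) (P i) = i - r + (r - i) := fun i hi =>
    hP.dist_eq (by omega) hi
  have hPpath := hP.isInducedPathSeq
  have hPadj_first : G.Adj (P 0) (P 1) := hPpath.adj_succ (by omega)
  have hPadj_last : G.Adj (P (2 * r - 1)) (P (2 * r)) := by
    simpa [Nat.sub_add_cancel (by omega : 1 ≤ 2 * r)] using
      hPpath.adj_succ (i := 2 * r - 1) (by omega)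
  obtain ⟨i₀, j₀, hij₀, hj₀L, hi₀, hj₀, hi₀_last, hj₀_first⟩ :=
    Nat.exists_last_before_first (A := fun t => G.Adj (S t) (P 1))
      (B := fun t => G.Adj (S t) (P (2 * r - 1))) (by rw [hS0]; exact hPadj_first)
      (by rw [hSL]; exact hPadj_last.symm)
  have hgap : 2 * r ≤ j₀ - i₀ + 4 := by
    have := hconn.dist_le_dist_add_four hPadj_first hi₀.symm hj₀ hPadj_last
    have := hS.dist_le hij₀ hj₀L
    rw [hP 0 (2 * r) (by omega) le_rfl] at *
    omega
  have hcycle := hasInducedCycleOfLen_of_isInducedPathSeq (X := fun i => P (1 + i))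
    (Y := fun j => S (i₀ + j)) (n₁ := 2 * r - 2) (n₂ := j₀ - i₀)
    (hPpath.shift (by omega)) (hS.shift (by omega)) (fun i hi j hj h => ?_) (fun i hi j hj => ?_)
  · exact ⟨_, by omega, hcycle⟩
  · have := hSfar (i₀ + j) (by omega)
    rw [← h, hPm (1 + i) (by omega)] at this
    omega
  constructor
  · intro h
    have h₁ := hconn.dist_triangle (u := P r) (v := P (1 + i)) (w := S (i₀ + j))
    rw [dist_eq_one_iff_adj.2 h, hPm (1 + i) (by omega)] at h₁
    have h₂ := hSfar (i₀ + j) (by omega)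
    by_contra hne
    rcases (show i = 0 ∨ i = 2 * r - 2 by omega) with rfl | rfl
    · exact hi₀_last (i₀ + j) (by omega) (by omega) h.symm
    · rw [show 1 + (2 * r - 2) = 2 * r - 1 by omega] at h
      exact hj₀_first (i₀ + j) (by omega) h.symm
  · rintro (⟨rfl, rfl⟩ | ⟨rfl, rfl⟩)
    · exact hi₀.symm
    · rw [show 1 + (2 * r - 2) = 2 * r - 1 by omega, show i₀ + (j₀ - i₀) = j₀ by omega]
      exact hj₀.symm

theorem exists_hasInducedCycleOfLen_of_walk_outside_ball (hconn : G.Connected) {P : ℕ → V}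
    {r : ℕ} (hP : IsGeodesicSeq G P (2 * r)) (hr : 2 ≤ r)
    (hwalk : ∃ p : G.Walk (P 0) (P (2 * r)), ∀ v ∈ p.support, r ≤ G.dist (P r) v) :
    ∃ ℓ, 4 * r - 4 ≤ ℓ ∧ G.HasInducedCycleOfLen ℓ := by
  obtain ⟨p, hp⟩ := hwalk
  obtain ⟨S, hS0, hSL, hS⟩ :=
    (p.induce {v | r ≤ G.dist (P r) v} hp).reachable.exists_isGeodesicSeq
  exact exists_hasInducedCycleOfLen_of_isInducedPathSeq_outside_ball hconn hP hr
    hS.isInducedPathSeq.induce (congrArg Subtype.val hS0) (congrArg Subtype.val hSL)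
    fun t _ => (S t).2

lemma IsGeodesicSeq.exists_walk_outside_ball (hconn : G.Connected) {P : ℕ → V} {k r : ℕ}
    (hP : IsGeodesicSeq G P n) (hdiam : ∀ u v, G.dist u v ≤ n) {z : V}
    (hz : n ≤ G.dist (P (k + r)) z + 1) (hrk : r ≤ k) (hkr : k + 3 * r ≤ n) :
    ∃ p : G.Walk (P k) (P (k + 2 * r)), ∀ v ∈ p.support, r ≤ G.dist (P (k + r)) v := by
  have h₁ := hP 0 k (by omega) (by omega)
  have h₂ := hP k (k + r) (by omega) (by omega)
  have h₃ := hP 0 (k + r) (by omega) (by omega)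
  have h₄ := hP (k + r) n (by omega) le_rfl
  have h₅ := hP (k + r) (k + 2 * r) (by omega) (by omega)
  have h₆ := hP (k + 2 * r) n (by omega) le_rfl
  rw [dist_comm] at h₁ h₂ h₃ h₆
  have hxz := hdiam (P 0) z
  have hzy := hdiam z (P n)
  obtain ⟨p₁, hp₁⟩ := hconn.exists_walk_forall_mem_support_le_dist (m := P (k + r)) (r := r)
    (u := P k) (w := P 0) (by omega)
  obtain ⟨p₂, hp₂⟩ := hconn.exists_walk_forall_mem_support_le_dist (m := P (k + r)) (r := r)
    (u := P 0) (w := z) (by omega)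
  obtain ⟨p₃, hp₃⟩ := hconn.exists_walk_forall_mem_support_le_dist (m := P (k + r)) (r := r)
    (u := z) (w := P n) (by omega)
  obtain ⟨p₄, hp₄⟩ := hconn.exists_walk_forall_mem_support_le_dist (m := P (k + r)) (r := r)
    (u := P n) (w := P (k + 2 * r)) (by omega)
  refine ⟨p₁.append (p₂.append (p₃.append p₄)), fun v hv => ?_⟩
  simp only [Walk.mem_support_append_iff] at hv
  rcases hv with hv | hv | hv | hv
  exacts [hp₁ v hv, hp₂ v hv, hp₃ v hv, hp₄ v hv]

end SimpleGraph

theorem nearlyTransitive_has_long_inducedCycle_general {W : Type*}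
    (G : SimpleGraph W)
    (hconn : G.Connected)
    (htrans : G.NearlyTransitive)
    (d : ℕ) (hd : G.diam = d) (hd20 : 20 ≤ d) :
    ∃ ℓ : ℕ, d - 17 ≤ ℓ ∧ G.HasInducedCycleOfLen ℓ := by
  have : Nonempty W := hconn.nonempty
  have hdiam : ∀ u v, G.dist u v ≤ d := fun u v =>
    hd ▸ G.dist_le_diam (G.ediam_ne_top_of_diam_ne_zero (by omega))
  obtain ⟨x, y, hxy⟩ := G.exists_dist_eq_diam
  rw [hd] at hxy
  obtain ⟨P, rfl, rfl, hP⟩ := hxy ▸ (hconn x y).exists_isGeodesicSeq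
  set r := d / 4
  set k := d / 2 - d / 4
  obtain ⟨z, hz⟩ := htrans.exists_dist_le_dist_add_one hconn (P 0) (P d) (P (k + r))
  have hwalk := hP.exists_walk_outside_ball hconn hdiam (hxy ▸ hz) (by omega) (by omega)
  obtain ⟨ℓ, hℓ, hcycle⟩ := SimpleGraph.exists_hasInducedCycleOfLen_of_walk_outside_ball hconn
    (P := fun i => P (k + i)) (hP.shift (by omega)) (by omega) hwalk
  exact ⟨ℓ, by omega, hcycle⟩

/-- Any connected nearly transitive finite simple graph with diameter `d ≥ 20` contains
an induced cycle of length at least `d - 17`. -/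
theorem nearlyTransitive_has_long_inducedCycle {W : Type*} [Fintype W]
    (G : SimpleGraph W)
    (hconn : G.Connected)
    (htrans : G.NearlyTransitive)
    (d : ℕ) (hd : G.diam = d) (hd20 : 20 ≤ d) :
    ∃ ℓ : ℕ, d - 17 ≤ ℓ ∧ G.HasInducedCycleOfLen ℓ :=
  nearlyTransitive_has_long_inducedCycle_general G hconn htrans d hd hd20
end

section
/- Let n_1, n_2 ≥ 2 be integers and let d = gcd(n_1, n_2). If the Cartesian product C⃗_{n_1} □ C⃗_{n_2} of the directed cycles on n_1 and n_2 vertices admits a directed Hamiltonian cycle, then d ≥ 2 and there exist positive integers d_1, d_2 with d_1 + d_2 = d such that gcd(n_1, d_1) = 1 and gcd(n_2, d_2) = 1. -/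
/-- The directed cycle on vertex set `ZMod n`, with an arc from `i` to `i + 1` for each `i`. -/
def dirCycleDigraph (n : ℕ) : Digraph (ZMod n) where
  Adj i j := j = i + 1

/-- The Cartesian product of two digraphs. -/
def Digraph.cartesianProd {α β : Type*} (D₁ : Digraph α) (D₂ : Digraph β) :
    Digraph (α × β) where
  Adj u v := (u.1 = v.1 ∧ D₂.Adj u.2 v.2) ∨ (u.2 = v.2 ∧ D₁.Adj u.1 v.1)

/-- `D.HasDirCycleOfLen n` means that `D` contains a directed cycle of length `n`. -/
def Digraph.HasDirCycleOfLen {V : Type*} (D : Digraph V) (n : ℕ) : Prop :=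
  1 ≤ n ∧ ∃ f : ZMod n → V, Function.Injective f ∧ ∀ i, D.Adj (f i) (f (i + 1))

/-!
Let `σ` be the successor permutation of a Hamiltonian cycle of `G = ℤ/n₁ × ℤ/n₂`, so every step
adds `a = (1, 0)` or `b = (0, 1)`. Since `v + a` can only be entered from `v` or from
`v + (a - b)`, `σ` commutes with translation by `a - b = (1, -1)` (Rankin). After
`d = gcd n₁ n₂` steps one has moved by `w = d₁ • a + d₂ • b` with `d₁ + d₂ = d`, and Bezout puts
`w` in the cyclic group `⟨(1, -1)⟩`; as `σ` is transitive, `σ ^ d` is translation by `w`.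
Because `σ` is a single cycle of length `n₁ n₂`, `w` has order `n₁ n₂ / d = lcm n₁ n₂`, which is
the order of `(1, -1)`, so `(1, -1) = k • w` for some `k`: then `k d₁ = 1` in `ℤ/n₁` and
`-k d₂ = 1` in `ℤ/n₂`.
-/

theorem AddSubgroup.mem_zmultiples_of_addOrderOf_eq {G : Type*} [AddGroup G] [Finite G] {u w : G}
    (hw : w ∈ zmultiples u) (h : addOrderOf w = addOrderOf u) : u ∈ zmultiples w := by
  rw [eq_of_le_of_card_ge (zmultiples_le.mpr hw)
    (by rw [Nat.card_zmultiples, Nat.card_zmultiples, h])]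
  exact mem_zmultiples u

namespace Equiv.Perm

variable {G : Type*} [AddCommGroup G] {a b : G} {σ : Perm G}

theorem exists_pow_apply_eq_add_nsmul_add_nsmul (hσ : ∀ v, σ v = v + a ∨ σ v = v + b)
    (m : ℕ) (v : G) : ∃ m₁ m₂ : ℕ, m₁ + m₂ = m ∧ (σ ^ m) v = v + (m₁ • a + m₂ • b) := by
  induction m with
  | zero => exact ⟨0, 0, rfl, by simp⟩
  | succ m ih =>
    obtain ⟨m₁, m₂, hm, hv⟩ := ih
    rw [pow_succ', mul_apply, hv]
    rcases hσ (v + (m₁ • a + m₂ • b)) with h | h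
    · exact ⟨m₁ + 1, m₂, by omega, by rw [h, succ_nsmul]; abel⟩
    · exact ⟨m₁, m₂ + 1, by omega, by rw [h, succ_nsmul]; abel⟩

theorem commute_add_sub (hσ : ∀ v, σ v = v + a ∨ σ v = v + b) (hab : a ≠ b) :
    Function.Commute σ (· + (a - b)) := by
  intro v
  show σ (v + (a - b)) = σ v + (a - b)
  rcases hσ v with hv | hv
  · rcases hσ (v + (a - b)) with h | h
    · rw [h, hv]; abel
    · have : v + (a - b) = v := σ.injective (by rw [h, hv]; abel)
      exact absurd (sub_eq_zero.mp (add_eq_left.mp this)) hab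
  · obtain ⟨x, hx⟩ := σ.surjective (v + a)
    rcases hσ x with h | h
    · obtain rfl : x = v := add_right_cancel (h.symm.trans hx)
      exact absurd (add_left_cancel (hv.symm.trans hx)) hab.symm
    · obtain rfl : x = v + (a - b) := by
        rw [← add_sub_cancel_right x b, h.symm.trans hx]; abel
      rw [hx, hv]; abel

theorem commute_add_of_mem_zmultiples (hσ : ∀ v, σ v = v + a ∨ σ v = v + b) (hab : a ≠ b)
    {h : G} (hh : h ∈ AddSubgroup.zmultiples (a - b)) : Function.Commute σ (· + h) := by
  obtain ⟨k, rfl⟩ := AddSubgroup.mem_zmultiples_iff.mp hh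
  exact fun v ↦ AddConstMapClass.map_add_zsmul
    (⟨σ, commute_add_sub hσ hab⟩ : AddConstMap G G (a - b) (a - b)) v k

theorem pow_eq_addRight {v₀ : G} (htrans : ∀ v, ∃ j : ℕ, (σ ^ j) v₀ = v) {d : ℕ}
    (hcomm : Function.Commute σ (· + ((σ ^ d) v₀ - v₀))) :
    σ ^ d = Equiv.addRight ((σ ^ d) v₀ - v₀) := by
  ext v
  obtain ⟨j, rfl⟩ := htrans v
  rw [← mul_apply, ← pow_add, add_comm, pow_add, mul_apply, coe_addRight, coe_pow σ j,
    ← (hcomm.iterate_left j) v₀]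
  exact congrArg _ (add_sub_cancel v₀ _).symm

end Equiv.Perm

theorem Equiv.permCongr_addRight_one_pow_apply {V : Type*} {N : ℕ} (e : ZMod N ≃ V) (j : ℕ)
    (i : ZMod N) : (e.permCongr (Equiv.addRight 1) ^ j) (e i) = e (i + j) := by
  induction j with
  | zero => simp
  | succ j ih =>
    rw [pow_succ', Equiv.Perm.mul_apply, ih, Equiv.permCongr_apply, Equiv.symm_apply_apply,
      Equiv.coe_addRight, Nat.cast_succ, ← add_assoc]

theorem Digraph.cartesianProd_dirCycleDigraph_adj_iff {n₁ n₂ : ℕ} {u v : ZMod n₁ × ZMod n₂} :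
    ((dirCycleDigraph n₁).cartesianProd (dirCycleDigraph n₂)).Adj u v ↔
      v = u + (1, 0) ∨ v = u + (0, 1) := by
  simp only [cartesianProd, dirCycleDigraph, Prod.ext_iff, Prod.fst_add, Prod.snd_add, add_zero]
  tauto

section
variable {n₁ n₂ : ℕ}

theorem zero_gcd_mem_zmultiples (m n : ℕ) :
    ((0 : ZMod m), ((m.gcd n : ℕ) : ZMod n)) ∈
      AddSubgroup.zmultiples ((1 : ZMod m), (-1 : ZMod n)) := by
  refine ⟨-(m * m.gcdA n), ?_⟩
  have : ((m.gcd n : ℕ) : ZMod n) = ((m * m.gcdA n : ℤ) : ZMod n) := by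
    rw [← Int.cast_natCast, Nat.gcd_eq_gcd_ab]; push_cast; simp
  ext <;> simp [this]

theorem nsmul_add_nsmul_mem_zmultiples {d₁ d₂ : ℕ} (h : d₁ + d₂ = n₁.gcd n₂) :
    d₁ • ((1 : ZMod n₁), (0 : ZMod n₂)) + d₂ • (0, 1) ∈
      AddSubgroup.zmultiples ((1 : ZMod n₁), (-1 : ZMod n₂)) := by
  have : d₁ • ((1 : ZMod n₁), (0 : ZMod n₂)) + d₂ • (0, 1) =
      d₁ • (1, -1) + (0, ((n₁.gcd n₂ : ℕ) : ZMod n₂)) := by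
    ext <;> simp [← h]
  rw [this]
  exact add_mem (nsmul_mem (AddSubgroup.mem_zmultiples _) _) (zero_gcd_mem_zmultiples n₁ n₂)

theorem addOrderOf_one_neg_one :
    addOrderOf ((1 : ZMod n₁), (-1 : ZMod n₂)) = n₁.lcm n₂ := by
  rw [Prod.addOrderOf, addOrderOf_neg, ZMod.addOrderOf_one, ZMod.addOrderOf_one]

theorem coprime_of_one_neg_one_mem_zmultiples {d₁ d₂ : ℕ}
    (h : ((1 : ZMod n₁), (-1 : ZMod n₂)) ∈
      AddSubgroup.zmultiples (d₁ • ((1 : ZMod n₁), (0 : ZMod n₂)) + d₂ • (0, 1))) :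
    n₁.Coprime d₁ ∧ n₂.Coprime d₂ := by
  obtain ⟨k, hk⟩ := h
  have h₁ : (k : ZMod n₁) * d₁ = 1 := by simpa using congrArg Prod.fst hk
  have h₂ : ((-k : ℤ) : ZMod n₂) * d₂ = 1 := by
    simpa [neg_eq_iff_eq_neg] using congrArg Prod.snd hk
  exact ⟨((ZMod.isUnit_iff_coprime _ _).mp (IsUnit.of_mul_eq_one_right _ h₁)).symm,
    ((ZMod.isUnit_iff_coprime _ _).mp (IsUnit.of_mul_eq_one_right _ h₂)).symm⟩

theorem exists_add_eq_gcd_coprime_of_cyclic_steps [NeZero n₁] [NeZero n₂]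
    [Nontrivial (ZMod n₁)] {σ : Equiv.Perm (ZMod n₁ × ZMod n₂)}
    (hσ : ∀ v, σ v = v + (1, 0) ∨ σ v = v + (0, 1))
    {v₀ : ZMod n₁ × ZMod n₂} (htrans : ∀ v, ∃ j : ℕ, (σ ^ j) v₀ = v)
    (hper : ∀ j : ℕ, (σ ^ j) v₀ = v₀ ↔ n₁ * n₂ ∣ j) :
    ∃ d₁ d₂ : ℕ, d₁ + d₂ = n₁.gcd n₂ ∧ n₁.Coprime d₁ ∧ n₂.Coprime d₂ := by
  set d := n₁.gcd n₂
  have hsub : ((1 : ZMod n₁), (0 : ZMod n₂)) - (0, 1) = (1, -1) := by simp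
  obtain ⟨d₁, d₂, hsum, hd⟩ := Equiv.Perm.exists_pow_apply_eq_add_nsmul_add_nsmul hσ d v₀
  set w := d₁ • ((1 : ZMod n₁), (0 : ZMod n₂)) + d₂ • (0, 1)
  have hw : w ∈ AddSubgroup.zmultiples (1, -1) := nsmul_add_nsmul_mem_zmultiples hsum
  have hpow : σ ^ d = Equiv.addRight w := by
    have hcomm := Equiv.Perm.commute_add_of_mem_zmultiples hσ (by simp) (hsub ▸ hw)
    rw [← add_sub_cancel_left v₀ w, ← hd] at hcomm ⊢
    exact Equiv.Perm.pow_eq_addRight htrans hcomm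
  have hord : addOrderOf w = n₁.lcm n₂ := by
    refine Nat.dvd_right_iff_eq.mp fun m ↦ ?_
    -- `m • w = 0` iff `σ ^ (d * m)` fixes `v₀`, i.e. iff `n₁ * n₂ = d * lcm n₁ n₂` divides `d * m`
    rw [addOrderOf_dvd_iff_nsmul_eq_zero, ← add_eq_left (a := v₀), ← add_right_iterate_apply,
      ← Equiv.coe_addRight, ← hpow, ← Equiv.Perm.coe_pow, ← pow_mul, hper,
      ← Nat.gcd_mul_lcm n₁ n₂,
      Nat.mul_dvd_mul_iff_left (Nat.gcd_pos_of_pos_left _ (NeZero.pos n₁))]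
  obtain ⟨h₁, h₂⟩ := coprime_of_one_neg_one_mem_zmultiples
    (AddSubgroup.mem_zmultiples_of_addOrderOf_eq hw (hord.trans addOrderOf_one_neg_one.symm))
  exact ⟨d₁, d₂, hsum, h₁, h₂⟩

end

/-- If the Cartesian product of the directed cycles on `n₁ ≥ 2` and `n₂ ≥ 2` vertices has
a directed Hamiltonian cycle, then `d := gcd(n₁, n₂) ≥ 2` and there exist positive
integers `d₁, d₂` with `d₁ + d₂ = d`, `gcd(n₁, d₁) = 1` and `gcd(n₂, d₂) = 1`. -/
theorem trotter_erdos (n₁ n₂ : ℕ) (h₁ : 2 ≤ n₁) (h₂ : 2 ≤ n₂) (d : ℕ)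
    (hd : d = Nat.gcd n₁ n₂)
    (hham : ((dirCycleDigraph n₁).cartesianProd (dirCycleDigraph n₂)).HasDirCycleOfLen
      (n₁ * n₂)) :
    2 ≤ d ∧ ∃ d₁ d₂ : ℕ, 0 < d₁ ∧ 0 < d₂ ∧ d₁ + d₂ = d ∧
      Nat.gcd n₁ d₁ = 1 ∧ Nat.gcd n₂ d₂ = 1 := by
  obtain ⟨-, f, hinj, hadj⟩ := hham
  have : NeZero n₁ := ⟨by omega⟩
  have : NeZero n₂ := ⟨by omega⟩
  have : Nontrivial (ZMod n₁) := ZMod.nontrivial_iff.mpr (by omega)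
  let e := Equiv.ofBijective f <|
    (Fintype.bijective_iff_injective_and_card f).mpr ⟨hinj, by simp [ZMod.card]⟩
  let σ := e.permCongr (Equiv.addRight 1)
  have hσ : ∀ v, σ v = v + (1, 0) ∨ σ v = v + (0, 1) := fun v ↦ by
    have h := Digraph.cartesianProd_dirCycleDigraph_adj_iff.mp (hadj (e.symm v))
    rwa [show f (e.symm v) = v from e.apply_symm_apply v] at h
  have htrans : ∀ v, ∃ j : ℕ, (σ ^ j) (e 0) = v := fun v ↦ ⟨(e.symm v).val, by
    rw [Equiv.permCongr_addRight_one_pow_apply, zero_add, ZMod.natCast_zmod_val,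
      e.apply_symm_apply]⟩
  have hper : ∀ j : ℕ, (σ ^ j) (e 0) = e 0 ↔ n₁ * n₂ ∣ j := fun j ↦ by
    rw [Equiv.permCongr_addRight_one_pow_apply, e.apply_eq_iff_eq, zero_add,
      ZMod.natCast_eq_zero_iff]
  obtain ⟨d₁, d₂, hsum, hcop₁, hcop₂⟩ :=
    exists_add_eq_gcd_coprime_of_cyclic_steps hσ htrans hper
  have hpos₁ : 0 < d₁ := Nat.pos_of_ne_zero fun h ↦ by
    rw [h, Nat.coprime_zero_right] at hcop₁; omega
  have hpos₂ : 0 < d₂ := Nat.pos_of_ne_zero fun h ↦ by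
    rw [h, Nat.coprime_zero_right] at hcop₂; omega
  exact ⟨by omega, d₁, d₂, hpos₁, hpos₂, hd ▸ hsum, hcop₁, hcop₂⟩
end

section
/- Let n_1, n_2 ≥ 2 be integers, let d = gcd(n_1, n_2), and suppose that for all positive integers d_1, d_2 with d_1 + d_2 = d we have gcd(n_1, d_1) ≥ 2 or gcd(n_2, d_2) ≥ 2. Then the perimeter gap of C⃗_{n_1} □ C⃗_{n_2} is at least d, i.e., every directed cycle in C⃗_{n_1} □ C⃗_{n_2} has length at most n_1·n_2 − d. -/
private lemma zmod_ne_add_one {n : ℕ} (hn : 2 ≤ n) (x : ZMod n) : x ≠ x + 1 := by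
  intro hx
  have h1 : (1 : ZMod n) = 0 := (left_eq_add.mp hx).symm ▸ rfl
  have : ((1 : ℕ) : ZMod n) = 0 := by exact_mod_cast h1
  have := (ZMod.natCast_eq_zero_iff 1 n).mp this
  have := Nat.le_of_dvd one_pos this
  omega

/-- Counting coordinates along the cycle. -/
private lemma aux_coords {n1 n2 m : ℕ} (f : ZMod m → ZMod n1 × ZMod n2)
    (hadj : ∀ i : ZMod m, ((f i).1 = (f (i+1)).1 ∧ (f (i+1)).2 = (f i).2 + 1) ∨
      ((f i).2 = (f (i+1)).2 ∧ (f (i+1)).1 = (f i).1 + 1)) (j : ℕ) :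
    ∃ a b : ℕ, a + b = j ∧ (f (j : ZMod m)).1 = (f 0).1 + (a : ZMod n1) ∧
      (f (j : ZMod m)).2 = (f 0).2 + (b : ZMod n2) := by
  induction j with
  | zero => exact ⟨0, 0, rfl, by simp, by simp⟩
  | succ j ih =>
    obtain ⟨a, b, hab, h1, h2⟩ := ih
    have hcast : ((j + 1 : ℕ) : ZMod m) = (j : ZMod m) + 1 := by push_cast; ring
    rcases hadj (j : ZMod m) with ⟨g1, g2⟩ | ⟨g1, g2⟩
    · refine ⟨a, b + 1, by omega, ?_, ?_⟩
      · rw [hcast, ← g1, h1]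
      · rw [hcast, g2, h2]; push_cast; ring
    · refine ⟨a + 1, b, by omega, ?_, ?_⟩
      · rw [hcast, g2, h1]; push_cast; ring
      · rw [hcast, ← g1, h2]

/-- The diagonal translation commutes with the successor map of a Hamiltonian cycle. -/
private lemma aux_shift {n1 n2 m : ℕ} (h1 : 2 ≤ n1) (h2 : 2 ≤ n2)
    (f : ZMod m → ZMod n1 × ZMod n2) (hinj : Function.Injective f)
    (hsurj : Function.Surjective f)
    (hadj : ∀ i : ZMod m, ((f i).1 = (f (i+1)).1 ∧ (f (i+1)).2 = (f i).2 + 1) ∨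
      ((f i).2 = (f (i+1)).2 ∧ (f (i+1)).1 = (f i).1 + 1))
    (i j : ZMod m) (hij : f j = ((f i).1 + 1, (f i).2 - 1)) :
    f (j + 1) = ((f (i + 1)).1 + 1, (f (i + 1)).2 - 1) := by
  have hj1 : (f j).1 = (f i).1 + 1 := by rw [hij]
  have hj2 : (f j).2 = (f i).2 - 1 := by rw [hij]
  rcases hadj i with ⟨a1, a2⟩ | ⟨a1, a2⟩
  · rcases hadj j with ⟨b1, b2⟩ | ⟨b1, b2⟩
    · -- e2 at i, e2 at j : fine
      have e1 : (f (j+1)).1 = (f (i+1)).1 + 1 := by rw [← b1, hj1, ← a1]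
      have e2 : (f (j+1)).2 = (f (i+1)).2 - 1 := by rw [b2, hj2, a2]; ring
      exact Prod.ext e1 e2
    · -- e2 at i, e1 at j : impossible (no predecessor of w)
      exfalso
      obtain ⟨l0, hl0⟩ := hsurj ((f i).1 + 1, (f i).2)
      set l := l0 - 1 with hldef
      have hl : f (l + 1) = ((f i).1 + 1, (f i).2) := by
        rw [hldef, sub_add_cancel]; exact hl0
      have hw1 : (f (l+1)).1 = (f i).1 + 1 := by rw [hl]
      have hw2 : (f (l+1)).2 = (f i).2 := by rw [hl]
      rcases hadj l with ⟨c1, c2⟩ | ⟨c1, c2⟩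
      · -- e2 at l : f l = f j
        have hl2 : (f l).2 = (f i).2 - 1 := by
          have : (f l).2 + 1 = (f i).2 := by rw [← c2, hw2]
          linear_combination this
        have hl1 : (f l).1 = (f i).1 + 1 := by rw [c1, hw1]
        have : f l = f j := by
          rw [hij]; exact Prod.ext hl1 hl2
        have hlj : l = j := hinj this
        have : (f (j+1)).1 = (f i).1 + 1 := by rw [← hlj, hw1]
        rw [b2, hj1] at this
        exact zmod_ne_add_one h1 ((f i).1 + 1) this.symm
      · -- e1 at l : f l = f i
        have hl1 : (f l).1 = (f i).1 := by
          have : (f l).1 + 1 = (f i).1 + 1 := by rw [← c2, hw1]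
          exact add_right_cancel this
        have hl2 : (f l).2 = (f i).2 := by rw [c1, hw2]
        have hli : l = i := hinj (Prod.ext hl1 hl2)
        have hcontra : (f i).1 = (f i).1 + 1 :=
          calc (f i).1 = (f (i+1)).1 := a1
            _ = (f (l+1)).1 := by rw [hli]
            _ = (f i).1 + 1 := hw1
        exact zmod_ne_add_one h1 (f i).1 hcontra
  · rcases hadj j with ⟨b1, b2⟩ | ⟨b1, b2⟩
    · -- e1 at i, e2 at j : impossible
      exfalso
      have e1 : (f (j+1)).1 = (f i).1 + 1 := by rw [← b1, hj1]
      have e2 : (f (j+1)).2 = (f i).2 := by rw [b2, hj2]; ring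
      have e1' : (f (i+1)).1 = (f i).1 + 1 := a2
      have e2' : (f (i+1)).2 = (f i).2 := a1.symm
      have : f (j+1) = f (i+1) := by
        rw [Prod.ext_iff]; exact ⟨by rw [e1, e1'], by rw [e2, e2']⟩
      have hji : j = i := by
        have := hinj this
        exact add_right_cancel this
      have hcontra := hj1
      rw [hji] at hcontra
      exact zmod_ne_add_one h1 _ hcontra
    · -- e1 at i, e1 at j : fine
      have e1 : (f (j+1)).1 = (f (i+1)).1 + 1 := by rw [b2, hj1, a2]
      have e2 : (f (j+1)).2 = (f (i+1)).2 - 1 := by rw [← b1, hj2, ← a1]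
      exact Prod.ext e1 e2

/-- Let `n₁, n₂ ≥ 2`, `d = gcd(n₁, n₂)`, and suppose that for all positive `d₁, d₂` with
`d₁ + d₂ = d` we have `gcd(n₁, d₁) ≥ 2` or `gcd(n₂, d₂) ≥ 2`. Then the perimeter gap of
the Cartesian product of the two directed cycles is at least `d`: every directed cycle in
it has length at most `n₁ n₂ - d`. -/
theorem perimeter_gap_of_prod_dirCycles (n₁ n₂ : ℕ) (h₁ : 2 ≤ n₁) (h₂ : 2 ≤ n₂)
    (d : ℕ) (hd : d = Nat.gcd n₁ n₂)
    (hpp : ∀ d₁ d₂ : ℕ, 0 < d₁ → 0 < d₂ → d₁ + d₂ = d →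
      2 ≤ Nat.gcd n₁ d₁ ∨ 2 ≤ Nat.gcd n₂ d₂) :
    ∀ m : ℕ,
      ((dirCycleDigraph n₁).cartesianProd (dirCycleDigraph n₂)).HasDirCycleOfLen m →
      m ≤ n₁ * n₂ - d := by
  intro m hcyc
  obtain ⟨hm1, f, hinj, hadj0⟩ := hcyc
  haveI : NeZero m := ⟨by omega⟩
  haveI : NeZero n₁ := ⟨by omega⟩
  haveI : NeZero n₂ := ⟨by omega⟩
  have hadj : ∀ i : ZMod m, ((f i).1 = (f (i+1)).1 ∧ (f (i+1)).2 = (f i).2 + 1) ∨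
      ((f i).2 = (f (i+1)).2 ∧ (f (i+1)).1 = (f i).1 + 1) := fun i => hadj0 i
  have hdpos : 0 < d := by
    rw [hd]; exact Nat.gcd_pos_of_pos_left n₂ (by omega)
  have hdn1 : d ∣ n₁ := hd ▸ Nat.gcd_dvd_left n₁ n₂
  have hdn2 : d ∣ n₂ := hd ▸ Nat.gcd_dvd_right n₁ n₂
  have hdN : d ∣ n₁ * n₂ := hdn1.mul_right n₂
  have hN4 : 4 ≤ n₁ * n₂ := by nlinarith
  have hmle : m ≤ n₁ * n₂ := by
    have := Fintype.card_le_of_injective f hinj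
    simpa [ZMod.card] using this
  have hdm : d ∣ m := by
    obtain ⟨a, b, hab, ha, hb⟩ := aux_coords f hadj m
    rw [ZMod.natCast_self] at ha hb
    have hn1a : n₁ ∣ a :=
      (ZMod.natCast_eq_zero_iff a n₁).mp (left_eq_add.mp ha)
    have hn2b : n₂ ∣ b :=
      (ZMod.natCast_eq_zero_iff b n₂).mp (left_eq_add.mp hb)
    have hda := (hdn1.trans hn1a)
    have hdb := (hdn2.trans hn2b)
    rw [← hab]
    exact Nat.dvd_add hda hdb
  by_cases hm : m = n₁ * n₂
  swap
  · have h3 : d ∣ n₁ * n₂ - m := Nat.dvd_sub hdN hdm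
    have h4 : 0 < n₁ * n₂ - m := by omega
    have := Nat.le_of_dvd h4 h3
    omega
  exfalso
  subst hm
  have hsurj : Function.Surjective f := by
    have hbij : Function.Bijective f :=
      (Fintype.bijective_iff_injective_and_card f).mpr ⟨hinj, by simp [ZMod.card]⟩
    exact hbij.2
  obtain ⟨c, hc⟩ := hsurj ((f 0).1 + 1, (f 0).2 - 1)
  have htau : ∀ i : ZMod (n₁ * n₂), f (i + c) = ((f i).1 + 1, (f i).2 - 1) := by
    have key : ∀ k : ℕ, f ((k : ZMod (n₁ * n₂)) + c)
        = ((f (k : ZMod (n₁ * n₂))).1 + 1, (f (k : ZMod (n₁ * n₂))).2 - 1) := by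
      intro k
      induction k with
      | zero => simpa using hc
      | succ k ih =>
        have hstep := aux_shift h₁ h₂ f hinj hsurj hadj (k : ZMod (n₁ * n₂))
          ((k : ZMod (n₁ * n₂)) + c) ih
        have hcast : ((k + 1 : ℕ) : ZMod (n₁ * n₂)) = (k : ZMod (n₁ * n₂)) + 1 := by
          push_cast; ring
        rw [hcast, show ((k : ZMod (n₁ * n₂)) + 1 + c) = ((k : ZMod (n₁ * n₂)) + c) + 1 by ring]
        exact hstep
    intro i
    have := key i.val
    rwa [ZMod.natCast_zmod_val] at this
  have hpow : ∀ (j : ℕ) (i : ZMod (n₁ * n₂)), f (i + (j : ZMod (n₁ * n₂)) * c) =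
      ((f i).1 + (j : ZMod n₁), (f i).2 - (j : ZMod n₂)) := by
    intro j
    induction j with
    | zero => intro i; simp
    | succ j ih =>
      intro i
      have h5 := htau (i + (j : ZMod (n₁ * n₂)) * c)
      rw [ih] at h5
      have hcast : (i + ((j + 1 : ℕ) : ZMod (n₁ * n₂)) * c)
          = (i + (j : ZMod (n₁ * n₂)) * c) + c := by push_cast; ring
      rw [hcast, h5]
      simp only [Prod.mk.injEq]
      constructor <;> push_cast <;> ring
  set cv := c.val with hcvdef
  have hcvc : (cv : ZMod (n₁ * n₂)) = c := ZMod.natCast_zmod_val c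
  have hfix : ∀ j : ℕ, n₁ * n₂ ∣ j * cv → (n₁ ∣ j ∧ n₂ ∣ j) := by
    intro j hj
    have h0 : ((j * cv : ℕ) : ZMod (n₁ * n₂)) = 0 :=
      (ZMod.natCast_eq_zero_iff _ _).mpr hj
    have h0' : (j : ZMod (n₁ * n₂)) * c = 0 := by
      rw [← hcvc]
      exact_mod_cast h0
    have h6 := hpow j 0
    rw [h0', add_zero] at h6
    constructor
    · have h6a : (f 0).1 = (f 0).1 + (j : ZMod n₁) := congrArg Prod.fst h6
      exact (ZMod.natCast_eq_zero_iff j n₁).mp (left_eq_add.mp h6a)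
    · have h6b : (f 0).2 = (f 0).2 - (j : ZMod n₂) := congrArg Prod.snd h6
      have : (j : ZMod n₂) = 0 := by linear_combination h6b
      exact (ZMod.natCast_eq_zero_iff j n₂).mp this
  set L := Nat.lcm n₁ n₂ with hLdef
  have hdL : d * L = n₁ * n₂ := by rw [hd, hLdef]; exact Nat.gcd_mul_lcm n₁ n₂
  have hLpos : 0 < L := Nat.pos_of_ne_zero (by intro h0; rw [h0, mul_zero] at hdL; omega)
  have hn1L : n₁ ∣ L := Nat.dvd_lcm_left n₁ n₂
  have hn2L : n₂ ∣ L := Nat.dvd_lcm_right n₁ n₂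
  have hL2 : 2 ≤ L := le_trans h₁ (Nat.le_of_dvd hLpos hn1L)
  have hrev : n₁ * n₂ ∣ L * cv := by
    have h7 := hpow L 0
    have hL1 : (L : ZMod n₁) = 0 := (ZMod.natCast_eq_zero_iff L n₁).mpr hn1L
    have hL2' : (L : ZMod n₂) = 0 := (ZMod.natCast_eq_zero_iff L n₂).mpr hn2L
    rw [hL1, hL2', add_zero, sub_zero, zero_add] at h7
    have h8 : f ((L : ZMod (n₁ * n₂)) * c) = f 0 := by
      rw [h7]
    have h9 : (L : ZMod (n₁ * n₂)) * c = 0 := hinj h8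
    rw [← hcvc] at h9
    have : ((L * cv : ℕ) : ZMod (n₁ * n₂)) = 0 := by push_cast; exact h9
    exact (ZMod.natCast_eq_zero_iff _ _).mp this
  have hd_cv : d ∣ cv := by
    have h10 : L * d ∣ L * cv := by
      rw [mul_comm L d, hdL]; exact hrev
    exact (mul_dvd_mul_iff_left (by omega : L ≠ 0)).mp h10
  have hd_e : d ∣ Nat.gcd (n₁ * n₂) cv := Nat.dvd_gcd hdN hd_cv
  have heN : Nat.gcd (n₁ * n₂) cv ∣ n₁ * n₂ := Nat.gcd_dvd_left _ cv
  have hecv : Nat.gcd (n₁ * n₂) cv ∣ cv := Nat.gcd_dvd_right _ cv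
  have he_d : Nat.gcd (n₁ * n₂) cv ∣ d := by
    obtain ⟨g, hgdef⟩ : ∃ g, Nat.gcd (n₁ * n₂) cv = g := ⟨_, rfl⟩
    rw [hgdef]
    have heN' : g ∣ n₁ * n₂ := hgdef ▸ heN
    have hecv' : g ∣ cv := hgdef ▸ hecv
    have hkey : n₁ * n₂ ∣ (n₁ * n₂ / g) * cv := by
      refine ⟨cv / g, ?_⟩
      calc (n₁ * n₂ / g) * cv = (n₁ * n₂ / g) * (g * (cv / g)) := by
            rw [Nat.mul_div_cancel' hecv']
        _ = ((n₁ * n₂ / g) * g) * (cv / g) := by ring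
        _ = (n₁ * n₂) * (cv / g) := by rw [Nat.div_mul_cancel heN']
    obtain ⟨hj1, hj2⟩ := hfix _ hkey
    obtain ⟨s, hs⟩ : L ∣ n₁ * n₂ / g := Nat.lcm_dvd hj1 hj2
    have hNe : g * (L * s) = n₁ * n₂ := by rw [← hs]; exact Nat.mul_div_cancel' heN'
    have h11 : d * L = g * s * L := by rw [hdL, ← hNe]; ring
    exact ⟨s, Nat.eq_of_mul_eq_mul_right hLpos h11⟩
  have hed : Nat.gcd (n₁ * n₂) cv = d := Nat.dvd_antisymm he_d hd_e
  set c' := cv / d with hc'def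
  have hcv' : cv = d * c' := (Nat.mul_div_cancel' hd_cv).symm
  have hcop : Nat.gcd L c' = 1 := by
    have h12 : Nat.gcd (d * L) (d * c') = d * Nat.gcd L c' := Nat.gcd_mul_left d L c'
    rw [hdL, ← hcv', hed] at h12
    exact Nat.eq_of_mul_eq_mul_left hdpos
      (show d * Nat.gcd L c' = d * 1 by rw [mul_one]; exact h12.symm)
  haveI : NeZero L := ⟨by omega⟩
  have hcop' : Nat.Coprime c' L := Nat.coprime_comm.mp hcop
  set mm := ((c' : ZMod L))⁻¹.val with hmmdef
  have hinv : (c' : ZMod L) * ((c' : ZMod L))⁻¹ = 1 := ZMod.coe_mul_inv_eq_one c' hcop'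
  have hmodL : ((c' * mm : ℕ) : ZMod L) = ((1 : ℕ) : ZMod L) := by
    push_cast
    rw [hmmdef, ZMod.natCast_zmod_val]
    exact_mod_cast hinv
  have hmod : c' * mm % L = 1 % L := (ZMod.natCast_eq_natCast_iff _ _ _).mp hmodL
  have h1L : 1 % L = 1 := Nat.mod_eq_of_lt (by omega)
  have hkey : c' * mm = L * (c' * mm / L) + 1 := by
    conv_lhs => rw [← Nat.div_add_mod (c' * mm) L]
    rw [hmod, h1L]
  set t := c' * mm / L with htdef
  have hcopmmL : Nat.gcd mm L = 1 := by
    have hg1 : Nat.gcd mm L ∣ c' * mm := (Nat.gcd_dvd_left mm L).mul_left c'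
    have hg2 : Nat.gcd mm L ∣ L * t := (Nat.gcd_dvd_right mm L).mul_right t
    have hgd : Nat.gcd mm L ∣ 1 := by
      have := Nat.dvd_sub hg1 hg2
      rw [hkey] at this
      simpa using this
    exact Nat.dvd_one.mp hgd
  have hcopmm1 : Nat.gcd n₁ mm = 1 :=
    Nat.Coprime.symm (Nat.Coprime.coprime_dvd_right hn1L hcopmmL)
  have hcopmm2 : Nat.gcd n₂ mm = 1 :=
    Nat.Coprime.symm (Nat.Coprime.coprime_dvd_right hn2L hcopmmL)
  have hmmcv : mm * cv = (n₁ * n₂) * t + d := by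
    rw [hcv']
    calc mm * (d * c') = d * (c' * mm) := by ring
      _ = d * (L * t + 1) := by rw [hkey]
      _ = (n₁ * n₂) * t + d := by rw [← hdL]; ring
  have hfd : f ((d : ZMod (n₁ * n₂))) = ((f 0).1 + (mm : ZMod n₁), (f 0).2 - (mm : ZMod n₂)) := by
    have h11 := hpow mm 0
    rw [zero_add] at h11
    have h12 : (mm : ZMod (n₁ * n₂)) * c = (d : ZMod (n₁ * n₂)) := by
      rw [← hcvc]
      have h13 : ((mm * cv : ℕ) : ZMod (n₁ * n₂)) = ((d : ℕ) : ZMod (n₁ * n₂)) := by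
        rw [hmmcv, Nat.cast_add, Nat.cast_mul, ZMod.natCast_self, zero_mul, zero_add]
      exact_mod_cast h13
    rw [h12] at h11
    exact h11
  obtain ⟨a, b, hab, ha, hb⟩ := aux_coords f hadj d
  rw [hfd] at ha hb
  have hamm : (a : ZMod n₁) = (mm : ZMod n₁) := add_left_cancel ha.symm
  have hbmm : n₂ ∣ b + mm := by
    have hb' : (b : ZMod n₂) = - (mm : ZMod n₂) := by linear_combination -hb
    have h13 : ((b + mm : ℕ) : ZMod n₂) = 0 := by push_cast; rw [hb']; ring
    exact (ZMod.natCast_eq_zero_iff _ _).mp h13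
  have hga : Nat.gcd n₁ a = 1 := by
    have hmod1 : a % n₁ = mm % n₁ := (ZMod.natCast_eq_natCast_iff' a mm n₁).mp hamm
    calc Nat.gcd n₁ a = Nat.gcd (a % n₁) n₁ := Nat.gcd_rec n₁ a
      _ = Nat.gcd (mm % n₁) n₁ := by rw [hmod1]
      _ = Nat.gcd n₁ mm := (Nat.gcd_rec n₁ mm).symm
      _ = 1 := hcopmm1
  have hgb : Nat.gcd n₂ b = 1 := by
    have hg1 : Nat.gcd n₂ b ∣ b + mm := (Nat.gcd_dvd_left n₂ b).trans hbmm
    have hg2 : Nat.gcd n₂ b ∣ mm := by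
      have := Nat.dvd_sub hg1 (Nat.gcd_dvd_right n₂ b)
      simpa using this
    have : Nat.gcd n₂ b ∣ Nat.gcd n₂ mm := Nat.dvd_gcd (Nat.gcd_dvd_left n₂ b) hg2
    rw [hcopmm2] at this
    exact Nat.dvd_one.mp this
  have hapos : 0 < a := by
    rcases Nat.eq_zero_or_pos a with h | h
    · rw [h, Nat.gcd_zero_right] at hga; omega
    · exact h
  have hbpos : 0 < b := by
    rcases Nat.eq_zero_or_pos b with h | h
    · rw [h, Nat.gcd_zero_right] at hgb; omega
    · exact h
  rcases hpp a b hapos hbpos hab with h | h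
  · omega
  · omega
end
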